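/- arXiv:2004.02812 — 3 statements merged into one kernel-verified Lean document; each statement's English description precedes it below -/
import Mathlib

section
/- Let k_1, …, k_n be positive integers with sum k = k_1 + ⋯ + k_n, let d_1 < ⋯ < d_m be the distinct values among k_1, …, k_n, and let p_1, …, p_m be their multiplicities. For any finpartition P of (Finset.univ : Finset (Fin k)) whose multiset of part cardinalities equals {k_1, …, k_n}, the stabilizer of P in Equiv.Perm (Fin k) (for the action by taking images of blocks) is a finite group of cardinality k_1! ⋯ k_n! · p_1! ⋯ p_m!. -/
/-- The action of a permutation `σ` of `Fin k` on a finpartition of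
`Finset.univ : Finset (Fin k)`, taking each block `B` to `Finset.image σ B`. -/
def finpartitionPermSmul {k : ℕ} (σ : Equiv.Perm (Fin k))
    (P : Finpartition (Finset.univ : Finset (Fin k))) :
    Finpartition (Finset.univ : Finset (Fin k)) where
  parts := P.parts.image fun B => B.image σ
  supIndep := by
    rw [Finset.supIndep_iff_pairwiseDisjoint]
    rintro a ha b hb hab
    simp only [Finset.coe_image, Set.mem_image, Finset.mem_coe] at ha hb
    obtain ⟨A, hA, rfl⟩ := ha
    obtain ⟨B, hB, rfl⟩ := hb
    have hAB : A ≠ B := fun h => hab (by rw [h])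
    exact (Finset.disjoint_image σ.injective).mpr
      (P.disjoint (Finset.mem_coe.mpr hA) (Finset.mem_coe.mpr hB) hAB)
  sup_parts := by
    ext x
    simp only [Finset.mem_sup, Finset.mem_univ, iff_true]
    obtain ⟨A, hA, hx⟩ := P.exists_mem (a := σ⁻¹ x) (Finset.mem_univ _)
    exact ⟨A.image σ, Finset.mem_image_of_mem _ hA,
      Finset.mem_image.mpr ⟨σ⁻¹ x, hx, by simp⟩⟩
  bot_notMem := by
    simp only [Finset.bot_eq_empty, Finset.mem_image, not_exists, not_and]
    intro A hA h
    exact P.bot_notMem (by simpa [Finset.image_eq_empty.mp h] using hA)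

/-- Permutations of `Fin k` act on finpartitions of `Finset.univ : Finset (Fin k)`
by taking images of blocks. -/
instance finpartitionPermAction {k : ℕ} :
    MulAction (Equiv.Perm (Fin k)) (Finpartition (Finset.univ : Finset (Fin k))) where
  smul := finpartitionPermSmul
  one_smul P := by
    apply Finpartition.ext
    show (P.parts.image fun B => B.image (1 : Equiv.Perm (Fin k))) = P.parts
    simp
  mul_smul σ τ P := by
    apply Finpartition.ext
    show (P.parts.image fun B => B.image (σ * τ))
        = ((P.parts.image fun B => B.image τ).image fun B => B.image σ)
    rw [Finset.image_image]
    simp [Finset.image_image, Function.comp_def]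

/-!
The stabiliser of `P` acts on the blocks of `P`. The kernel of this action consists of the
permutations preserving every block, a product of symmetric groups of order `∏ kᵢ!`. Its image
consists of all size-preserving permutations of the blocks, of order `∏ pⱼ!`: such a permutation
of blocks lifts to `Fin k` by choosing bijections between blocks of equal size.
-/

open Finset Equiv MulAction
open scoped Nat

theorem Finset.prod_factorial_mul_prod_factorial_card_fiber {α : Type*} (s : Finset α)
    (f : α → ℕ) :
    (∏ x ∈ s, (f x)!) * ∏ d ∈ s.image f, (#{x ∈ s | f x = d})! =
      ((s.1.map f).map Nat.factorial).prod *
        ∏ d ∈ (s.1.map f).toFinset, ((s.1.map f).count d)! := by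
  rw [prod_eq_multiset_prod, Multiset.map_map]
  congr 1
  refine prod_congr rfl fun d _ => ?_
  rw [Multiset.count_map, card_def, filter_val]
  simp only [eq_comm]

namespace Finpartition

variable {α : Type*} [Fintype α] [DecidableEq α] (P : Finpartition (univ : Finset α))

theorem image_part_univ : univ.image P.part = P.parts := by
  ext B
  refine ⟨fun hB => ?_, fun hB => ?_⟩
  · obtain ⟨a, -, rfl⟩ := mem_image.mp hB
    exact P.part_mem.mpr (mem_univ a)
  · obtain ⟨a, -, rfl⟩ := P.part_surjOn hB
    exact mem_image_of_mem _ (mem_univ a)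

theorem card_subtype_part_eq {B : Finset α} (hB : B ∈ P.parts) :
    Fintype.card {a // P.part a = B} = #B := by
  simp [Fintype.card_subtype, P.part_eq_iff_mem hB]

theorem forall_image_eq_self_iff_part_comp (σ : Perm α) :
    (∀ B ∈ P.parts, B.image σ = B) ↔ P.part ∘ σ = P.part := by
  constructor
  · intro h
    funext a
    have hpart := P.part_mem.mpr (mem_univ a)
    have ha := mem_image_of_mem σ (P.mem_part (mem_univ a))
    rw [h _ hpart] at ha
    exact P.part_eq_of_mem hpart ha
  · intro h B hB
    refine eq_of_subset_of_card_le (fun _ hb => ?_) (card_image_of_injective _ σ.injective).ge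
    obtain ⟨a, ha, rfl⟩ := mem_image.mp hb
    exact (P.part_eq_iff_mem hB).mp ((congrFun h a).trans (P.part_eq_of_mem hB ha))

theorem exists_perm_image_eq (π : Perm P.parts) (hπ : ∀ B, #(π B).1 = #B.1) :
    ∃ σ : Perm α, ∀ B, B.1.image σ = (π B).1 := by
  let e : α ≃ Σ B : P.parts, B.1 := (subtypeUnivEquiv mem_univ).symm.trans P.equivSigmaParts
  let F : ∀ B : P.parts, B.1 ≃ (π B).1 := fun B => equivOfCardEq (hπ B).symm
  refine ⟨e.trans ((sigmaCongr π F).trans e.symm), fun B => ?_⟩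
  refine eq_of_subset_of_card_le (fun _ hb => ?_) ?_
  · obtain ⟨a, ha, rfl⟩ := mem_image.mp hb
    obtain rfl : B = ⟨P.part a, P.part_mem.mpr (mem_univ a)⟩ :=
      Subtype.ext (P.part_eq_of_mem B.2 ha).symm
    exact (F _ _).2
  · rw [card_image_of_injective _ (Equiv.injective _), hπ]

end Finpartition

section StabilizerFinpartition

variable {k : ℕ} (P : Finpartition (univ : Finset (Fin k)))

theorem finpartition_smul_parts (σ : Perm (Fin k)) :
    (σ • P).parts = P.parts.image (·.image σ) := rfl

theorem mem_stabilizer_finpartition_iff {σ : Perm (Fin k)} :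
    σ ∈ stabilizer (Perm (Fin k)) P ↔ ∀ B ∈ P.parts, B.image σ ∈ P.parts := by
  rw [mem_stabilizer_iff, Finpartition.ext_iff, finpartition_smul_parts]
  refine ⟨fun h B hB => h ▸ mem_image_of_mem _ hB, fun h => ?_⟩
  refine eq_of_subset_of_card_le (fun _ hC => ?_) (card_image_of_injective _ ?_).ge
  · obtain ⟨B, hB, rfl⟩ := mem_image.mp hC
    exact h B hB
  · exact image_injective σ.injective

instance : MulAction (stabilizer (Perm (Fin k)) P) P.parts where
  smul σ B := ⟨B.1.image σ, (mem_stabilizer_finpartition_iff P).mp σ.2 B.1 B.2⟩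
  one_smul B := Subtype.ext B.1.image_id
  mul_smul σ τ B := Subtype.ext (show B.1.image (σ.1 * τ.1) = (B.1.image τ.1).image σ.1 by
    rw [image_image, Perm.coe_mul])

theorem card_ker_toPermHom_parts :
    Nat.card (toPermHom (stabilizer (Perm (Fin k)) P) P.parts).ker = ∏ B ∈ P.parts, (#B)! := by
  have e : (toPermHom (stabilizer (Perm (Fin k)) P) P.parts).ker ≃
      {σ : Perm (Fin k) // P.part ∘ σ = P.part} := by
    refine (subtypeEquivRight fun σ => ?_).trans (subtypeSubtypeEquivSubtype fun {σ} hσ => ?_)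
    · rw [MonoidHom.mem_ker, ← P.forall_image_eq_self_iff_part_comp, Perm.ext_iff, Subtype.forall]
      exact forall₂_congr fun B hB => Subtype.ext_iff
    · refine (mem_stabilizer_finpartition_iff P).mpr fun B hB => ?_
      rwa [(P.forall_image_eq_self_iff_part_comp σ).mpr hσ B hB]
  rw [Nat.card_congr e, Nat.card_eq_fintype_card, DomMulAct.stabilizer_card', P.image_part_univ]
  exact prod_congr rfl fun B hB => by rw [P.card_subtype_part_eq hB]

theorem card_range_toPermHom_parts :
    Nat.card (toPermHom (stabilizer (Perm (Fin k)) P) P.parts).range =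
      ∏ d ∈ P.parts.image card, (#{B ∈ P.parts | #B = d})! := by
  have e : (toPermHom (stabilizer (Perm (Fin k)) P) P.parts).range ≃
      {π : Perm P.parts // (fun B : P.parts => #B.1) ∘ π = fun B => #B.1} := by
    refine subtypeEquivRight fun π => ⟨?_, fun hπ => ?_⟩
    · rintro ⟨σ, rfl⟩
      funext B
      exact card_image_of_injective _ σ.1.injective
    · obtain ⟨σ, hσ⟩ := P.exists_perm_image_eq π (congrFun hπ)
      refine ⟨⟨σ, (mem_stabilizer_finpartition_iff P).mpr fun B hB => ?_⟩, ?_⟩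
      · rw [hσ ⟨B, hB⟩]
        exact (π _).2
      · exact Perm.ext fun B => Subtype.ext (hσ B)
  rw [Nat.card_congr e, Nat.card_eq_fintype_card, DomMulAct.stabilizer_card']
  refine prod_congr ?_ fun d _ => ?_
  · conv_rhs => rw [← P.parts.attach_image_val, image_image]
    rfl
  · rw [Fintype.card_subtype, univ_eq_attach, filter_attach (#· = d), card_map, card_attach]

theorem card_stabilizer_finpartition_eq :
    Nat.card (stabilizer (Perm (Fin k)) P) =
      (∏ B ∈ P.parts, (#B)!) * ∏ d ∈ P.parts.image card, (#{B ∈ P.parts | #B = d})! := by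
  rw [← (toPermHom _ P.parts).ker.card_mul_index, Subgroup.index_ker,
    card_ker_toPermHom_parts, card_range_toPermHom_parts]

end StabilizerFinpartition

theorem card_stabilizer_finpartition_general
    (n k : ℕ) (c : Fin n → ℕ)
    (P : Finpartition (Finset.univ : Finset (Fin k)))
    (hP : Multiset.map Finset.card P.parts.val = Multiset.map c Finset.univ.val) :
    Finite (MulAction.stabilizer (Equiv.Perm (Fin k)) P) ∧
    Nat.card (MulAction.stabilizer (Equiv.Perm (Fin k)) P) =
      (∏ i, Nat.factorial (c i)) *
        ∏ d ∈ Finset.image c Finset.univ,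
          Nat.factorial (Finset.univ.filter fun i => c i = d).card := by
  refine ⟨inferInstance, ?_⟩
  rw [card_stabilizer_finpartition_eq, prod_factorial_mul_prod_factorial_card_fiber,
    prod_factorial_mul_prod_factorial_card_fiber, hP]

/-- For positive integers `k_1, …, k_n` with sum `k`, with distinct values
`d_1 < ⋯ < d_m` occurring with multiplicities `p_1, …, p_m`, and any finpartition
`P` of `Finset.univ : Finset (Fin k)` whose multiset of part cardinalities is
`{k_1, …, k_n}`, the stabilizer of `P` under the action of `Equiv.Perm (Fin k)`
by taking images of blocks is a finite group of cardinality
`k_1! ⋯ k_n! ⋅ p_1! ⋯ p_m!`. -/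
theorem card_stabilizer_finpartition
    (n k : ℕ) (c : Fin n → ℕ) (hc : ∀ i, 0 < c i) (hk : ∑ i, c i = k)
    (P : Finpartition (Finset.univ : Finset (Fin k)))
    (hP : Multiset.map Finset.card P.parts.val = Multiset.map c Finset.univ.val) :
    Finite (MulAction.stabilizer (Equiv.Perm (Fin k)) P) ∧
    Nat.card (MulAction.stabilizer (Equiv.Perm (Fin k)) P) =
      (∏ i, Nat.factorial (c i)) *
        ∏ d ∈ Finset.image c Finset.univ,
          Nat.factorial (Finset.univ.filter fun i => c i = d).card :=
  card_stabilizer_finpartition_general n k c P hP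
end

section
/- Let k_1, …, k_n be positive integers with sum k = k_1 + ⋯ + k_n, let d_1 < ⋯ < d_m be the distinct values among k_1, …, k_n, and let p_1, …, p_m be their multiplicities. For any finpartition P of (Finset.univ : Finset (Fin k)) whose multiset of part cardinalities equals {k_1, …, k_n}, the stabilizer of P in Equiv.Perm (Fin k) is isomorphic as a group to the direct product ∏_{i=1}^{m} ((Equiv.Perm (Fin d_i))^{p_i} ⋊ Equiv.Perm (Fin p_i)) of the wreath products Σ_{d_i} ≀ Σ_{p_i}. -/
/-- The homomorphism `Equiv.Perm (Fin p) →* MulAut (Fin p → G)` permuting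
coordinates of the `p`-fold direct power of `G`; the associated semidirect
product `(Fin p → G) ⋊[permuteAut G p] Equiv.Perm (Fin p)` is the wreath
product `G ≀ Σ_p`. -/
def permuteAut (G : Type*) [Group G] (p : ℕ) :
    Equiv.Perm (Fin p) →* MulAut (Fin p → G) where
  toFun π :=
    { toFun := fun f => f ∘ ⇑π.symm
      invFun := fun f => f ∘ ⇑π
      left_inv := fun f => by ext x; simp
      right_inv := fun f => by ext x; simp
      map_mul' := fun f g => rfl }
  map_one' := by ext f x; rfl
  map_mul' := fun π₁ π₂ => by ext f x; rfl


/-!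
Label each block of `P` as `(d, j)`, where `d` is its size and `j < p_d`, and the points of
the block `(d, j)` by `Fin d`. This identifies `Fin k` with `Σ d, Fin p_d × Fin d` so that the
blocks of `P` become the fibres of `(d, j, x) ↦ (d, j)`. A permutation stabilises `P` iff it
maps blocks onto blocks, necessarily of the same size; after transport along the labelling
these are exactly the permutations `(d, j, x) ↦ (d, π_d j, f_d (π_d j) x)`, i.e. the image of
the faithful action of `∏ d, Σ_d ≀ Σ_{p_d}`.
-/

open Equiv Finset

abbrev PermWreath (m p : ℕ) : Type :=
  (Fin p → Perm (Fin m)) ⋊[permuteAut (Perm (Fin m)) p] Perm (Fin p)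

namespace PermWreath

variable {D : Type*} (p q : D → ℕ)

def piToPerm : (∀ d, PermWreath (q d) (p d)) →* Perm (Σ d, Fin (p d) × Fin (q d)) where
  toFun w := sigmaCongrRight fun d =>
    (w d).right.prodShear fun j => (w d).left ((w d).right j)
  map_one' := rfl
  map_mul' v w := by
    ext ⟨d, j, x⟩ : 1
    simp [permuteAut, Perm.mul_apply]

variable {p q}

@[simp]
theorem piToPerm_apply (w : ∀ d, PermWreath (q d) (p d)) (d : D) (j : Fin (p d))
    (x : Fin (q d)) :
    piToPerm p q w ⟨d, j, x⟩ = ⟨d, (w d).right j, (w d).left ((w d).right j) x⟩ := rfl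

theorem piToPerm_injective (hq : ∀ d, 0 < q d) : Function.Injective (piToPerm p q) := by
  intro v w h
  have happ d j x := congrArg (· ⟨d, j, x⟩) h
  simp only [piToPerm_apply, Sigma.mk.inj_iff, heq_eq_eq, true_and, Prod.mk.injEq] at happ
  have hright d : (v d).right = (w d).right := Equiv.ext fun j => (happ d j ⟨0, hq d⟩).1
  funext d
  refine SemidirectProduct.ext (funext fun j' => Equiv.ext fun x => ?_) (hright d)
  obtain ⟨j, rfl⟩ := (v d).right.surjective j'
  simpa [hright d] using (happ d j x).2

theorem mem_range_piToPerm (hq : ∀ d, 0 < q d) {τ : Perm (Σ d, Fin (p d) × Fin (q d))} :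
    τ ∈ (piToPerm p q).range ↔ ∀ d j, ∃ j', ∀ x, ∃ y, τ ⟨d, j, x⟩ = ⟨d, j', y⟩ := by
  constructor
  · rintro ⟨w, rfl⟩ d j
    exact ⟨(w d).right j, fun x => ⟨_, piToPerm_apply w d j x⟩⟩
  intro hτ
  choose π g hg using hτ
  have hinj d j j' x x' (h : (π d j, g d j x) = (π d j', g d j' x')) : j = j' ∧ x = x' := by
    simpa using τ.injective ((hg d j x).trans ((congrArg (Sigma.mk d) h).trans (hg d j' x').symm))
  have hg_bij d j : Function.Bijective (g d j) :=
    Finite.injective_iff_bijective.mp fun x x' h => (hinj d j j x x' (by rw [h])).2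
  have hπ_bij d : Function.Bijective (π d) := by
    refine Finite.injective_iff_bijective.mp fun j j' h => ?_
    obtain ⟨x, hx⟩ := (hg_bij d j).2 ⟨0, hq d⟩
    obtain ⟨x', hx'⟩ := (hg_bij d j').2 ⟨0, hq d⟩
    exact (hinj d j j' x x' (by rw [h, hx, hx'])).1
  let πe d := ofBijective (π d) (hπ_bij d)
  refine ⟨fun d => ⟨fun j => ofBijective _ (hg_bij d ((πe d).symm j)), πe d⟩, ?_⟩
  ext ⟨d, j, x⟩ : 1
  simp [πe, hg]

end PermWreath

theorem exists_equiv_sigma_fin_of_card_fiber {ι D : Type*} [Fintype ι] [DecidableEq D]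
    (f : ι → D) (p : D → ℕ) (hp : ∀ d, Fintype.card {i // f i = d} = p d) :
    ∃ e : ι ≃ Σ d, Fin (p d), ∀ i, (e i).1 = f i :=
  ⟨(sigmaFiberEquiv f).symm.trans (sigmaCongrRight fun d => Fintype.equivFinOfCardEq (hp d)),
    fun _ => rfl⟩

theorem sigma_prod_fst_eq_iff {D : Type*} {p q : D → ℕ} (t : Σ d, Fin (p d) × Fin (q d))
    (d : D) (j : Fin (p d)) :
    (⟨t.1, t.2.1⟩ : Σ d, Fin (p d)) = ⟨d, j⟩ ↔ ∃ y, t = ⟨d, j, y⟩ := by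
  obtain ⟨d', j', y⟩ := t
  constructor
  · rintro ⟨⟩
    exact ⟨y, rfl⟩
  · rintro ⟨y, ⟨⟩⟩
    rfl

theorem card_filter_eq_of_map_val_eq {α β γ : Type*} [DecidableEq γ] {s : Finset α}
    {t : Finset β} {f : α → γ} {g : β → γ} (h : s.val.map f = t.val.map g) (c : γ) :
    #{a ∈ s | f a = c} = #{b ∈ t | g b = c} := by
  have hcount := congrArg (Multiset.count c) h
  simp only [Multiset.count_map, eq_comm (a := c)] at hcount
  exact hcount

theorem Fintype.card_subtype_coe_eq_card_filter {α : Type*} (s : Finset α) (g : α → Prop)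
    [DecidablePred g] : Fintype.card {a : s // g a} = #{a ∈ s | g a} := by
  rw [Fintype.card_subtype, univ_eq_attach, filter_attach g, card_map, card_attach]

namespace Finpartition

section Labelling

variable {α : Type*} [Fintype α] [DecidableEq α] (P : Finpartition (univ : Finset α))
  {D : Type*} {p q : D → ℕ} (e : P.parts ≃ Σ d, Fin (p d)) (he : ∀ B, #B.1 = q (e B).1)

noncomputable def equivSigmaProd : α ≃ Σ d, Fin (p d) × Fin (q d) :=
  (subtypeUnivEquiv mem_univ).symm.trans P.equivSigmaParts
    |>.trans (sigmaCongrRight fun B => B.1.equivFinOfCardEq (he B))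
    |>.trans (sigmaCongrLeft (β := fun t => Fin (q t.1)) e)
    |>.trans (sigmaAssoc fun d _ => Fin (q d))
    |>.trans (sigmaCongrRight fun _ => sigmaEquivProd _ _)

theorem mem_iff_exists_equivSigmaProd_eq (a : α) (B : P.parts) :
    a ∈ B.1 ↔ ∃ x, P.equivSigmaProd e he a = ⟨(e B).1, (e B).2, x⟩ := by
  rw [← sigma_prod_fst_eq_iff]
  change a ∈ B.1 ↔ e ⟨P.part a, P.part_mem.2 (mem_univ a)⟩ = e B
  rw [e.apply_eq_iff_eq, Subtype.ext_iff, P.part_eq_iff_mem B.2]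

end Labelling

variable {k : ℕ} {P : Finpartition (univ : Finset (Fin k))}

theorem mem_stabilizer_iff_image_mem {σ : Perm (Fin k)} :
    σ ∈ MulAction.stabilizer (Perm (Fin k)) P ↔ ∀ B ∈ P.parts, B.image σ ∈ P.parts := by
  have hparts : (σ • P).parts = P.parts.image (image σ) := rfl
  rw [MulAction.mem_stabilizer_iff, Finpartition.ext_iff, hparts, ← image_subset_iff]
  refine ⟨fun h => h.le, fun h => eq_of_subset_of_card_le h ?_⟩
  rw [card_image_of_injective _ (image_injective σ.injective)]

variable {D : Type*} {p q : D → ℕ} (e : P.parts ≃ Σ d, Fin (p d)) (he : ∀ B, #B.1 = q (e B).1)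

theorem image_eq_iff_equivSigmaProd {σ : Perm (Fin k)} {d : D} {j j' : Fin (p d)} :
    (e.symm ⟨d, j⟩).1.image σ = (e.symm ⟨d, j'⟩).1 ↔
      ∀ x, ∃ y, P.equivSigmaProd e he (σ ((P.equivSigmaProd e he).symm ⟨d, j, x⟩)) =
        ⟨d, j', y⟩ := by
  set E := P.equivSigmaProd e he
  have hmem j a : a ∈ (e.symm ⟨d, j⟩).1 ↔ ∃ x, E a = ⟨d, j, x⟩ := by
    rw [mem_iff_exists_equivSigmaProd_eq, e.apply_symm_apply]
  constructor
  · intro h x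
    rw [← hmem, ← h]
    exact mem_image_of_mem σ ((hmem j _).2 ⟨x, E.apply_symm_apply _⟩)
  · intro h
    refine eq_of_subset_of_card_le (fun b hb => ?_) ?_
    · obtain ⟨a, ha, rfl⟩ := mem_image.1 hb
      obtain ⟨x, hx⟩ := (hmem j a).1 ha
      rw [hmem, E.eq_symm_apply.2 hx]
      exact h x
    · simp [card_image_of_injective _ σ.injective, he]

theorem mem_stabilizer_iff_permCongrHom_mem_range (hq : Function.Injective q)
    (hq_pos : ∀ d, 0 < q d) {σ : Perm (Fin k)} :
    σ ∈ MulAction.stabilizer (Perm (Fin k)) P ↔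
      (P.equivSigmaProd e he).permCongrHom σ ∈ (PermWreath.piToPerm p q).range := by
  rw [PermWreath.mem_range_piToPerm hq_pos, mem_stabilizer_iff_image_mem]
  constructor
  · intro h d j
    have hmem := h _ (e.symm ⟨d, j⟩).2
    rcases himg : e ⟨_, hmem⟩ with ⟨d', j'⟩
    obtain rfl : d' = d := hq <| by
      have hcard := he ⟨_, hmem⟩
      rwa [himg, card_image_of_injective _ σ.injective, he, e.apply_symm_apply, eq_comm] at hcard
    refine ⟨j', (image_eq_iff_equivSigmaProd e he).1 ?_⟩
    rw [e.symm_apply_eq.2 himg.symm]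
  · intro h B hB
    rcases hBe : e ⟨B, hB⟩ with ⟨d, j⟩
    obtain ⟨j', hj'⟩ := h d j
    obtain rfl : B = (e.symm ⟨d, j⟩).1 := by rw [← hBe, e.symm_apply_apply]
    rw [(image_eq_iff_equivSigmaProd e he).2 hj']
    exact (e.symm _).2

noncomputable def stabilizerMulEquivPiPermWreath (hq : Function.Injective q)
    (hq_pos : ∀ d, 0 < q d) :
    MulAction.stabilizer (Perm (Fin k)) P ≃* ∀ d, PermWreath (q d) (p d) :=
  let E := P.equivSigmaProd e he
  have hmap : (MulAction.stabilizer (Perm (Fin k)) P).map E.permCongrHom.toMonoidHom =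
      (PermWreath.piToPerm p q).range := by
    ext τ
    rw [Subgroup.mem_map_equiv, mem_stabilizer_iff_permCongrHom_mem_range e he hq hq_pos,
      MulEquiv.apply_symm_apply]
  (E.permCongrHom.subgroupMap _).trans <| (MulEquiv.subgroupCongr hmap).trans
    (MonoidHom.ofInjective (PermWreath.piToPerm_injective hq_pos)).symm

end Finpartition

theorem stabilizer_finpartition_iso_prod_wreath_general
    (n k : ℕ) (c : Fin n → ℕ) (hc : ∀ i, 0 < c i)
    (P : Finpartition (Finset.univ : Finset (Fin k)))
    (hP : Multiset.map Finset.card P.parts.val = Multiset.map c Finset.univ.val) :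
    Nonempty ((MulAction.stabilizer (Equiv.Perm (Fin k)) P) ≃*
      ∀ d : (Finset.image c Finset.univ : Finset ℕ),
        (Fin (Finset.univ.filter fun i => c i = (d : ℕ)).card → Equiv.Perm (Fin (d : ℕ)))
          ⋊[permuteAut (Equiv.Perm (Fin (d : ℕ)))
              (Finset.univ.filter fun i => c i = (d : ℕ)).card]
          Equiv.Perm (Fin (Finset.univ.filter fun i => c i = (d : ℕ)).card)) := by
  have hcard_mem (B : P.parts) : #B.1 ∈ image c univ := by
    obtain ⟨i, -, hi⟩ := Multiset.mem_map.1 (hP ▸ Multiset.mem_map_of_mem card B.2)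
    exact hi ▸ mem_image_of_mem c (mem_univ i)
  obtain ⟨e, he⟩ := exists_equiv_sigma_fin_of_card_fiber
    (fun B : P.parts => (⟨#B.1, hcard_mem B⟩ : ↥(image c univ))) (fun d => #{i | c i = d})
    fun d => by
      simp only [Subtype.ext_iff]
      rw [Fintype.card_subtype_coe_eq_card_filter P.parts (#· = d), card_filter_eq_of_map_val_eq hP]
  have hq_pos (d : ↥(image c univ)) : 0 < (d : ℕ) := by
    obtain ⟨i, -, hi⟩ := mem_image.1 d.2
    exact hi ▸ hc i
  exact ⟨P.stabilizerMulEquivPiPermWreath e (fun B => by rw [he]) Subtype.val_injective hq_pos⟩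

/-- For positive integers `k_1, …, k_n` with sum `k`, with distinct values
`d_1 < ⋯ < d_m` occurring with multiplicities `p_1, …, p_m`, and any finpartition
`P` of `Finset.univ : Finset (Fin k)` whose multiset of part cardinalities is
`{k_1, …, k_n}`, the stabilizer of `P` in `Equiv.Perm (Fin k)` is isomorphic as
a group to the direct product `∏ i, Σ_{d_i} ≀ Σ_{p_i}` of wreath products
`(Equiv.Perm (Fin d_i))^{p_i} ⋊ Equiv.Perm (Fin p_i)`. -/
theorem stabilizer_finpartition_iso_prod_wreath
    (n k : ℕ) (c : Fin n → ℕ) (hc : ∀ i, 0 < c i) (hk : ∑ i, c i = k)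
    (P : Finpartition (Finset.univ : Finset (Fin k)))
    (hP : Multiset.map Finset.card P.parts.val = Multiset.map c Finset.univ.val) :
    Nonempty ((MulAction.stabilizer (Equiv.Perm (Fin k)) P) ≃*
      ∀ d : (Finset.image c Finset.univ : Finset ℕ),
        (Fin (Finset.univ.filter fun i => c i = (d : ℕ)).card → Equiv.Perm (Fin (d : ℕ)))
          ⋊[permuteAut (Equiv.Perm (Fin (d : ℕ)))
              (Finset.univ.filter fun i => c i = (d : ℕ)).card]
          Equiv.Perm (Fin (Finset.univ.filter fun i => c i = (d : ℕ)).card)) :=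
  stabilizer_finpartition_iso_prod_wreath_general n k c hc P hP
end

section
/- Let k_1, …, k_n be positive integers with sum k = k_1 + ⋯ + k_n, and let I_1, …, I_n be the partition of Fin k into consecutive intervals with |I_j| = k_j (so I_j consists of the elements with indices in [k_1 + ⋯ + k_{j-1}, k_1 + ⋯ + k_j)). Then the stabilizer in Equiv.Perm (Fin k) of this interval finpartition (for the action by taking images of blocks) equals the subgroup generated by: (a) all permutations σ that fix every element outside some single block I_j (equivalently, σ(I_j) = I_j and σ is the identity off I_j), and (b) for each pair i < j with k_i = k_j, the involution that exchanges I_i and I_j via the unique order-preserving bijections between them and fixes all other elements. -/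
/-!
A permutation stabilizes the partition iff it maps every block onto a block, i.e. iff it induces
a permutation `p` of the block indices; `p` preserves block sizes. If `p = 1`, the permutation is
the product of its restrictions to the single blocks. Otherwise pick `i` with `p i ≠ i`:
composing with the order-preserving exchange of the blocks `i` and `p i` (which have equal size)
replaces `p` by `swap i (p i) * p`, whose support is smaller, so induction on `#p.support`
finishes.
-/

open Finset Equiv Function

section BlockPermutations

variable {α ι : Type*} [DecidableEq α] {B : ι → Finset α}
  {H : Subgroup (Perm α)}

theorem apply_mem_iff_of_image_eq_self {σ : Perm α} {s : Finset α} (hσ : s.image σ = s)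
    (x : α) : σ x ∈ s ↔ x ∈ s := by
  conv_lhs => rw [← hσ]
  exact σ.injective.mem_finset_image

theorem image_eq_self_of_forall_notMem {σ : Perm α} {s : Finset α}
    (hσ : ∀ x ∉ s, σ x = x) : s.image σ = s := by
  refine eq_of_subset_of_card_le (image_subset_iff.2 fun x hx => ?_)
    (card_image_of_injective _ σ.injective).ge
  by_contra h
  rw [σ.injective (hσ _ h)] at h
  exact h hx

theorem image_eq_self_of_disjoint {σ : Perm α} {s t : Finset α} (hst : Disjoint s t)
    (hσ : ∀ x ∉ s, σ x = x) : t.image σ = t :=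
  (image_congr fun x hx => hσ x (disjoint_right.1 hst hx)).trans image_id

theorem image_block_eq_self_of_forall_notMem (hB : Pairwise (Disjoint on B)) {σ : Perm α}
    {j : ι} (hσ : ∀ x ∉ B j, σ x = x) (m : ι) : (B m).image σ = B m := by
  obtain rfl | hm := eq_or_ne j m
  · exact image_eq_self_of_forall_notMem hσ
  · exact image_eq_self_of_disjoint (hB hm) hσ

theorem image_block_eq_swap [DecidableEq ι] (hB : Pairwise (Disjoint on B)) {σ : Perm α} {i j : ι}
    (hij : i ≠ j) (hcard : #(B i) = #(B j)) (hi : ∀ x ∈ B i, σ x ∈ B j)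
    (hj : ∀ x ∈ B j, σ x ∈ B i) (hσ : ∀ x, x ∉ B i → x ∉ B j → σ x = x) (m : ι) :
    (B m).image σ = B (swap i j m) := by
  rcases eq_or_ne m i with rfl | hmi
  · rw [swap_apply_left]
    exact eq_of_subset_of_card_le (image_subset_iff.2 hi)
      (by rw [card_image_of_injective _ σ.injective, hcard])
  rcases eq_or_ne m j with rfl | hmj
  · rw [swap_apply_right]
    exact eq_of_subset_of_card_le (image_subset_iff.2 hj)
      (by rw [card_image_of_injective _ σ.injective, hcard])
  rw [swap_apply_of_ne_of_ne hmi hmj]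
  exact (image_congr fun x hx =>
    hσ x (disjoint_left.1 (hB hmi) hx) (disjoint_left.1 (hB hmj) hx)).trans image_id

theorem mem_of_forall_image_block_eq_self [Fintype ι] (hB : Pairwise (Disjoint on B))
    (hcover : ∀ x, ∃ i, x ∈ B i) (hlocal : ∀ i (τ : Perm α), (∀ x ∉ B i, τ x = x) → τ ∈ H)
    {σ : Perm α} (hσ : ∀ i, (B i).image σ = B i) : σ ∈ H := by
  suffices key : ∀ s : Finset ι, ∀ σ : Perm α, (∀ i, (B i).image σ = B i) →
      (∀ x, (∀ i ∈ s, x ∉ B i) → σ x = x) → σ ∈ H by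
    refine key univ σ hσ fun x hx => ?_
    obtain ⟨i, hi⟩ := hcover x
    exact absurd hi (hx i (mem_univ i))
  classical
  intro s
  induction s using Finset.induction_on with
  | empty =>
    intro σ _ hfix
    rw [show σ = 1 from Equiv.ext fun x => hfix x (by simp)]
    exact H.one_mem
  | insert a s _ ih =>
    intro σ hσ hfix
    set τ := Perm.ofSubtype (σ.subtypePerm (apply_mem_iff_of_image_eq_self (hσ a)))
    have hτ_in : ∀ x ∈ B a, τ x = σ x := fun x hx => Perm.ofSubtype_subtypePerm_of_mem _ hx
    have hτ_out : ∀ x ∉ B a, τ x = x := fun x hx => Perm.ofSubtype_subtypePerm_of_not_mem _ hx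
    have hτσ_in : ∀ x ∈ B a, (τ⁻¹ * σ) x = x := fun x hx => by
      rw [Perm.mul_apply, Perm.inv_eq_iff_eq, hτ_in x hx]
    have hτσ_out : ∀ x ∉ B a, (τ⁻¹ * σ) x = σ x := fun x hx => by
      rw [Perm.mul_apply, Perm.inv_eq_iff_eq, hτ_out]
      rwa [apply_mem_iff_of_image_eq_self (hσ a)]
    have hrest : τ⁻¹ * σ ∈ H := by
      refine ih _ (fun i => ?_) fun x hx => ?_
      · obtain rfl | hia := eq_or_ne a i
        · exact (image_congr hτσ_in).trans image_id
        · exact (image_congr fun x hx => hτσ_out x (disjoint_right.1 (hB hia) hx)).trans (hσ i)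
      · by_cases hxa : x ∈ B a
        · exact hτσ_in x hxa
        · rw [hτσ_out x hxa]
          exact hfix x (by simpa [hxa] using hx)
    simpa using H.mul_mem (hlocal a τ hτ_out) hrest

theorem mem_of_forall_image_block_eq_perm [Fintype ι] [DecidableEq ι]
    (hB : Pairwise (Disjoint on B)) (hcover : ∀ x, ∃ i, x ∈ B i)
    (hlocal : ∀ i (τ : Perm α), (∀ x ∉ B i, τ x = x) → τ ∈ H)
    (hswap : ∀ i j, i ≠ j → #(B i) = #(B j) → ∃ g ∈ H, ∀ m, (B m).image g = B (swap i j m))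
    (p : Perm ι) {σ : Perm α} (hσ : ∀ i, (B i).image σ = B (p i)) : σ ∈ H := by
  induction hN : #p.support using Nat.strong_induction_on generalizing p σ with
  | _ N ih =>
  by_cases hp : p = 1
  · subst hp
    exact mem_of_forall_image_block_eq_self hB hcover hlocal hσ
  obtain ⟨i, hi⟩ : ∃ i, p i ≠ i := by
    by_contra! h
    exact hp (Perm.ext h)
  have hcard : #(B i) = #(B (p i)) := by rw [← hσ, card_image_of_injective _ σ.injective]
  obtain ⟨g, hg, hgB⟩ := hswap i (p i) hi.symm hcard
  have hgσ : g * σ ∈ H := ih _ (hN ▸ Perm.card_support_swap_mul hi) (swap i (p i) * p)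
    (fun m => by rw [Perm.coe_mul, ← image_image, hσ, hgB, Perm.mul_apply]) rfl
  simpa using H.mul_mem (H.inv_mem hg) hgσ

end BlockPermutations

theorem Finpartition.mem_stabilizer_iff_exists_perm {ι : Type*} [Fintype ι] {k : ℕ}
    {B : ι → Finset (Fin k)} (hB : Injective B) {P : Finpartition (univ : Finset (Fin k))}
    (hP : P.parts = univ.image B) {σ : Perm (Fin k)} :
    σ ∈ MulAction.stabilizer (Perm (Fin k)) P ↔ ∃ p : Perm ι, ∀ i, (B i).image σ = B (p i) := by
  have hparts : (σ • P).parts = P.parts.image (·.image σ) := rfl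
  rw [MulAction.mem_stabilizer_iff]
  constructor
  · intro hσ
    have hmem : ∀ i, ∃ j, B j = (B i).image σ := fun i => by
      have : (B i).image σ ∈ (σ • P).parts := by
        rw [hparts, hP]
        exact mem_image_of_mem _ (mem_image_of_mem _ (mem_univ i))
      simpa [hσ, hP] using this
    choose p hp using hmem
    have hinj : Injective p := fun i j hij =>
      hB (image_injective σ.injective (by rw [← hp, ← hp, hij]))
    exact ⟨Equiv.ofBijective p hinj.bijective_of_finite, fun i => (hp i).symm⟩
  · classical
    rintro ⟨p, hp⟩
    refine Finpartition.ext ?_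
    rw [hparts, hP, image_image]
    simp only [comp_def, hp]
    rw [← comp_def B p, ← image_image, image_univ_of_surjective p.surjective]

section IntervalBlocks

variable {n k : ℕ} {c : Fin n → ℕ}

def blockStart (c : Fin n → ℕ) (j : Fin n) : ℕ := ∑ i ∈ Iio j, c i

def intervalBlock (k : ℕ) (c : Fin n → ℕ) (j : Fin n) : Finset (Fin k) :=
  univ.filter fun x : Fin k => blockStart c j ≤ x ∧ x < blockStart c j + c j

@[simp]
theorem mem_intervalBlock {j : Fin n} {x : Fin k} :
    x ∈ intervalBlock k c j ↔ blockStart c j ≤ x ∧ x < blockStart c j + c j := by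
  simp [intervalBlock]

theorem blockStart_add_eq_sum_Iic (j : Fin n) : blockStart c j + c j = ∑ i ∈ Iic j, c i :=
  sum_Iio_add_eq_sum_Iic j

theorem blockStart_add_le_of_lt {i j : Fin n} (hij : i < j) :
    blockStart c i + c i ≤ blockStart c j := by
  rw [blockStart_add_eq_sum_Iic]
  exact sum_le_sum_of_subset fun x hx => mem_Iio.2 ((mem_Iic.1 hx).trans_lt hij)

theorem blockStart_add_le_sum (j : Fin n) : blockStart c j + c j ≤ ∑ i, c i := by
  rw [blockStart_add_eq_sum_Iic]
  exact sum_le_sum_of_subset (subset_univ _)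

theorem pairwise_disjoint_intervalBlock : Pairwise (Disjoint on intervalBlock k c) := by
  intro i j hij
  rw [onFun, disjoint_left]
  intro x hxi hxj
  rw [mem_intervalBlock] at hxi hxj
  rcases hij.lt_or_gt with h | h
  · have := blockStart_add_le_of_lt (c := c) h; omega
  · have := blockStart_add_le_of_lt (c := c) h; omega

theorem card_intervalBlock (hk : ∑ i, c i ≤ k) (j : Fin n) : #(intervalBlock k c j) = c j := by
  have hlt : ∀ m ∈ Ico (blockStart c j) (blockStart c j + c j), m < k := fun m hm =>
    (mem_Ico.1 hm).2.trans_le ((blockStart_add_le_sum j).trans hk)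
  have : intervalBlock k c j = (Ico (blockStart c j) (blockStart c j + c j)).attachFin hlt := by
    ext x
    rw [mem_intervalBlock, mem_attachFin, mem_Ico]
  rw [this, card_attachFin, Nat.card_Ico, Nat.add_sub_cancel_left]

theorem intervalBlock_injective (hk : ∑ i, c i ≤ k) (hc : ∀ i, 0 < c i) :
    Injective (intervalBlock k c) := by
  intro i j hij
  by_contra hne
  obtain ⟨x, hx⟩ := card_pos.1 ((card_intervalBlock hk i).symm ▸ hc i)
  exact disjoint_left.1 (pairwise_disjoint_intervalBlock hne) hx (hij ▸ hx)

theorem mem_intervalBlock_of_val_eq {i j : Fin n} (hcij : c i = c j) {x y : Fin k}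
    (hx : x ∈ intervalBlock k c i) (hy : (y : ℕ) = x - blockStart c i + blockStart c j) :
    y ∈ intervalBlock k c j := by
  rw [mem_intervalBlock] at hx ⊢
  omega

theorem exists_perm_translate_intervalBlock (hk : ∑ i, c i ≤ k) {i j : Fin n} (hij : i < j)
    (hcij : c i = c j) :
    ∃ g : Perm (Fin k),
      (∀ x ∈ intervalBlock k c i, (g x : ℕ) = x - blockStart c i + blockStart c j) ∧
      (∀ x ∈ intervalBlock k c j, (g x : ℕ) = x - blockStart c j + blockStart c i) ∧
      (∀ x, x ∉ intervalBlock k c i → x ∉ intervalBlock k c j → g x = x) := by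
  have hgap := blockStart_add_le_of_lt (c := c) hij
  have hfit := (blockStart_add_le_sum (c := c) j).trans hk
  let t (x : ℕ) : ℕ :=
    if blockStart c i ≤ x ∧ x < blockStart c i + c i then x - blockStart c i + blockStart c j
    else if blockStart c j ≤ x ∧ x < blockStart c j + c j then x - blockStart c j + blockStart c i
    else x
  have ht_lt (x : Fin k) : t x < k := by
    simp only [t]
    split_ifs <;> omega
  have ht : Involutive fun x : Fin k => (⟨t x, ht_lt x⟩ : Fin k) := by
    intro x
    ext
    simp only [t]
    split_ifs <;> omega
  refine ⟨ht.toPerm _, fun x hx => ?_, fun x hx => ?_, fun x hxi hxj => ?_⟩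
  · rw [mem_intervalBlock] at hx
    simp only [Involutive.coe_toPerm, t, if_pos hx]
  · have hxi := disjoint_right.1 (pairwise_disjoint_intervalBlock hij.ne) hx
    rw [mem_intervalBlock] at hx hxi
    simp only [Involutive.coe_toPerm, t, if_neg hxi, if_pos hx]
  · rw [mem_intervalBlock] at hxi hxj
    ext
    simp only [Involutive.coe_toPerm, t, if_neg hxi, if_neg hxj]

theorem image_intervalBlock_eq_swap (hk : ∑ i, c i ≤ k) {i j : Fin n} (hij : i < j)
    (hcij : c i = c j) {σ : Perm (Fin k)}
    (hi : ∀ x ∈ intervalBlock k c i, (σ x : ℕ) = x - blockStart c i + blockStart c j)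
    (hj : ∀ x ∈ intervalBlock k c j, (σ x : ℕ) = x - blockStart c j + blockStart c i)
    (hσ : ∀ x, x ∉ intervalBlock k c i → x ∉ intervalBlock k c j → σ x = x) (m : Fin n) :
    (intervalBlock k c m).image σ = intervalBlock k c (swap i j m) :=
  image_block_eq_swap pairwise_disjoint_intervalBlock hij.ne
    (by rw [card_intervalBlock hk, card_intervalBlock hk, hcij])
    (fun x hx => mem_intervalBlock_of_val_eq hcij hx (hi x hx))
    (fun x hx => mem_intervalBlock_of_val_eq hcij.symm hx (hj x hx)) hσ m

end IntervalBlocks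

/-- Let `k_1, …, k_n` be positive integers with sum `k`, let `I_1, …, I_n` be the
partition of `Fin k` into consecutive intervals of lengths `k_1, …, k_n` (so
`I_j` consists of the elements with values in `[k_1 + ⋯ + k_{j-1}, k_1 + ⋯ + k_j)`),
and let `P` be the corresponding interval finpartition of
`Finset.univ : Finset (Fin k)`.  Then the stabilizer of `P` in
`Equiv.Perm (Fin k)` (for the action by taking images of blocks) equals the
subgroup generated by (a) the permutations fixing every element outside a single
block `I_j`, and (b) for each pair `i < j` with `k_i = k_j`, the involution
exchanging `I_i` and `I_j` via the unique order-preserving bijections between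
them and fixing all other elements. -/
theorem stabilizer_interval_finpartition_eq_closure
    (n k : ℕ) (c : Fin n → ℕ) (hc : ∀ i, 0 < c i) (hk : ∑ i, c i = k)
    (off : Fin n → ℕ) (hoff : ∀ j, off j = ∑ i ∈ Finset.Iio j, c i)
    (I : Fin n → Finset (Fin k))
    (hI : ∀ j, I j = Finset.univ.filter fun x : Fin k =>
        off j ≤ (x : ℕ) ∧ (x : ℕ) < off j + c j)
    (P : Finpartition (Finset.univ : Finset (Fin k)))
    (hP : P.parts = Finset.image I Finset.univ) :
    MulAction.stabilizer (Equiv.Perm (Fin k)) P =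
      Subgroup.closure
        ({σ : Equiv.Perm (Fin k) | ∃ j : Fin n, ∀ x : Fin k, x ∉ I j → σ x = x} ∪
         {σ : Equiv.Perm (Fin k) | ∃ i j : Fin n, i < j ∧ c i = c j ∧
            (∀ x ∈ I i, ((σ x : Fin k) : ℕ) = (x : ℕ) - off i + off j) ∧
            (∀ x ∈ I j, ((σ x : Fin k) : ℕ) = (x : ℕ) - off j + off i) ∧
            (∀ x : Fin k, x ∉ I i → x ∉ I j → σ x = x)}) := by
  obtain rfl : off = blockStart c := funext hoff
  obtain rfl : I = intervalBlock k c := funext hI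
  have hcover (x : Fin k) : ∃ j, x ∈ intervalBlock k c j := by
    obtain ⟨B, hB, hx⟩ := P.exists_mem (mem_univ x)
    obtain ⟨j, -, rfl⟩ := mem_image.1 (hP ▸ hB)
    exact ⟨j, hx⟩
  have hstab (σ : Perm (Fin k)) :=
    Finpartition.mem_stabilizer_iff_exists_perm (σ := σ) (intervalBlock_injective hk.le hc) hP
  apply le_antisymm
  · intro σ hσ
    obtain ⟨p, hp⟩ := (hstab σ).1 hσ
    refine mem_of_forall_image_block_eq_perm pairwise_disjoint_intervalBlock hcover
      (fun j τ hτ => Subgroup.subset_closure (.inl ⟨j, hτ⟩)) (fun i j hij hcard => ?_) p hp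
    rw [card_intervalBlock hk.le, card_intervalBlock hk.le] at hcard
    wlog hlt : i < j generalizing i j
    · simpa only [swap_comm] using this j i hij.symm hcard.symm (hij.symm.lt_of_le (not_lt.1 hlt))
    obtain ⟨g, hgi, hgj, hg⟩ := exists_perm_translate_intervalBlock hk.le hlt hcard
    exact ⟨g, Subgroup.subset_closure (.inr ⟨i, j, hlt, hcard, hgi, hgj, hg⟩),
      image_intervalBlock_eq_swap hk.le hlt hcard hgi hgj hg⟩
  · rw [Subgroup.closure_le]
    rintro σ (⟨j, hσ⟩ | ⟨i, j, hij, hcij, hi, hj, hσ⟩)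
    · exact (hstab σ).2 ⟨1, image_block_eq_self_of_forall_notMem pairwise_disjoint_intervalBlock hσ⟩
    · exact (hstab σ).2 ⟨swap i j, image_intervalBlock_eq_swap hk.le hij hcij hi hj hσ⟩
end
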